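/- Let g : (0,∞) → ℝ be a bounded nonnegative measurable function, not identically zero on any interval (T,∞), with (1/t) ∫_0^t g(s) ds → 0 as t → ∞. Then there exists a positive increasing function λ : (0,∞) → ℝ with λ(t) → ∞ and a sequence t_k → ∞ with t_{k+1} > 2 t_k such that (1/t_k) ∫_0^{t_k} λ(s) g(s) ds → 0 as k → ∞. -/

import Mathlib

/-!
Choose times `t₀ < t₁ < ⋯` with `2 tₖ < tₖ₊₁` at which the Cesàro average of `g` is at
most `4⁻ᵏ`, and let `λ` take the value `2ᵏ` on `(tₖ₋₁, tₖ]`. Since `λ ≤ 2ᵏ` on the whole of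
`(0, tₖ]` and `g ≥ 0`, the average of `λ g` over `(0, tₖ]` is at most `2ᵏ · 4⁻ᵏ = 2⁻ᵏ`.
-/

open MeasureTheory Set Filter Topology

lemma exists_seq_two_mul_lt_of_eventually {P : ℕ → ℝ → Prop}
    (hP : ∀ k, ∀ᶠ x in atTop, P k x) :
    ∃ t : ℕ → ℝ, 0 < t 0 ∧ (∀ k, 2 * t k < t (k + 1)) ∧ ∀ k, P k (t k) := by
  choose f hfP hlt using fun k (a : ℝ) => ((hP k).and (eventually_gt_atTop a)).exists
  let t : ℕ → ℝ := fun k => Nat.rec (f 0 0) (fun k tk => f (k + 1) (2 * tk)) k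
  refine ⟨t, hlt 0 0, fun k => hlt (k + 1) _, ?_⟩
  rintro (_ | k)
  exacts [hfP 0 0, hfP (k + 1) _]

section DoublingSequence

variable {t : ℕ → ℝ}

lemma pos_of_two_mul_lt (h0 : 0 < t 0) (h2 : ∀ k, 2 * t k < t (k + 1)) (k : ℕ) : 0 < t k := by
  induction k with
  | zero => exact h0
  | succ k ih => linarith [h2 k]

lemma strictMono_of_two_mul_lt (h0 : 0 < t 0) (h2 : ∀ k, 2 * t k < t (k + 1)) : StrictMono t :=
  strictMono_nat_of_lt_succ fun k => by linarith [h2 k, pos_of_two_mul_lt h0 h2 k]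

lemma tendsto_atTop_of_two_mul_lt (h0 : 0 < t 0) (h2 : ∀ k, 2 * t k < t (k + 1)) :
    Tendsto t atTop atTop :=
  tendsto_atTop_of_geom_le h0 one_lt_two fun k => (h2 k).le

end DoublingSequence

noncomputable def stepIndex (t : ℕ → ℝ) (s : ℝ) : ℕ := sInf {k | s ≤ t k}

section StepIndex

variable {t : ℕ → ℝ}

lemma stepIndex_le {s : ℝ} {k : ℕ} (h : s ≤ t k) : stepIndex t s ≤ k := Nat.sInf_le h

lemma le_apply_stepIndex (ht : Tendsto t atTop atTop) (s : ℝ) : s ≤ t (stepIndex t s) :=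
  Nat.sInf_mem (s := {k | s ≤ t k}) (ht.eventually_ge_atTop s).exists

lemma monotone_stepIndex (ht : Tendsto t atTop atTop) : Monotone (stepIndex t) :=
  fun _ b hab => stepIndex_le (hab.trans (le_apply_stepIndex ht b))

lemma tendsto_stepIndex (ht : Tendsto t atTop atTop) (hmono : Monotone t) :
    Tendsto (stepIndex t) atTop atTop := by
  refine tendsto_atTop.2 fun k => ?_
  filter_upwards [eventually_gt_atTop (t k)] with s hs
  by_contra! hlt
  exact (le_apply_stepIndex ht s |>.trans (hmono hlt.le)).not_gt hs

end StepIndex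

lemma setIntegral_mul_le_mul_setIntegral {α : Type*} [MeasurableSpace α] {μ : Measure α}
    {f g : α → ℝ} {s : Set α} {C : ℝ} (hs : MeasurableSet s) (hg : IntegrableOn g s μ)
    (hf : AEStronglyMeasurable f (μ.restrict s)) (hf0 : ∀ x ∈ s, 0 ≤ f x)
    (hfC : ∀ x ∈ s, f x ≤ C) (hg0 : ∀ x ∈ s, 0 ≤ g x) :
    ∫ x in s, f x * g x ∂μ ≤ C * ∫ x in s, g x ∂μ := by
  have hfg : IntegrableOn (fun x => f x * g x) s μ :=
    hg.bdd_mul hf <| (ae_restrict_iff' hs).2 <| ae_of_all _ fun x hx => by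
      rw [Real.norm_eq_abs, abs_of_nonneg (hf0 x hx)]
      exact hfC x hx
  rw [← integral_const_mul]
  exact setIntegral_mono_on hfg (hg.const_mul C) hs fun x hx =>
    mul_le_mul_of_nonneg_right (hfC x hx) (hg0 x hx)

theorem stmt3_general (g : ℝ → ℝ) (hgm : Measurable g)
    (hgb : ∃ B, ∀ t > (0:ℝ), |g t| ≤ B)
    (hg0 : ∀ t > (0:ℝ), 0 ≤ g t)
    (havg : Tendsto (fun t => (1 / t) * ∫ s in Set.Ioc (0:ℝ) t, g s) atTop (nhds 0)) :
    ∃ lam : ℝ → ℝ, (∀ t > (0:ℝ), 0 < lam t) ∧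
      MonotoneOn lam (Set.Ioi (0:ℝ)) ∧
      Tendsto lam atTop atTop ∧
      ∃ tk : ℕ → ℝ, (∀ k, 0 < tk k) ∧ (∀ k, 2 * tk k < tk (k + 1)) ∧
        Tendsto tk atTop atTop ∧
        Tendsto (fun k => (1 / tk k) * ∫ s in Set.Ioc (0:ℝ) (tk k), lam s * g s)
          atTop (nhds 0) := by
  obtain ⟨t, h0, h2, hsmall⟩ := exists_seq_two_mul_lt_of_eventually fun k =>
    havg.eventually_le_const (by positivity : (0:ℝ) < 4⁻¹ ^ k)
  have htop := tendsto_atTop_of_two_mul_lt h0 h2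
  set lam : ℝ → ℝ := fun s => 2 ^ stepIndex t s
  have hlam : Monotone lam := fun _ _ hab =>
    pow_le_pow_right₀ one_le_two (monotone_stepIndex htop hab)
  refine ⟨lam, fun s _ => by positivity, hlam.monotoneOn _,
    (tendsto_pow_atTop_atTop_of_one_lt one_lt_two).comp
      (tendsto_stepIndex htop (strictMono_of_two_mul_lt h0 h2).monotone),
    t, pos_of_two_mul_lt h0 h2, h2, htop, ?_⟩
  obtain ⟨B, hB⟩ := hgb
  have hg : ∀ a, IntegrableOn g (Ioc 0 a) := fun a =>
    Measure.integrableOn_of_bounded measure_Ioc_lt_top.ne hgm.aestronglyMeasurable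
      ((ae_restrict_iff' measurableSet_Ioc).2 (ae_of_all _ fun s hs => hB s hs.1))
  have hbound : ∀ k, (1 / t k) * ∫ s in Ioc 0 (t k), lam s * g s ≤ 2⁻¹ ^ k := fun k => by
    have htk := pos_of_two_mul_lt h0 h2 k
    calc (1 / t k) * ∫ s in Ioc 0 (t k), lam s * g s
        ≤ (1 / t k) * (2 ^ k * ∫ s in Ioc 0 (t k), g s) := by
          gcongr
          exact setIntegral_mul_le_mul_setIntegral measurableSet_Ioc (hg _)
            hlam.measurable.aestronglyMeasurable (fun s _ => by positivity)
            (fun s hs => pow_le_pow_right₀ one_le_two (stepIndex_le hs.2)) fun s hs => hg0 s hs.1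
      _ = 2 ^ k * ((1 / t k) * ∫ s in Ioc 0 (t k), g s) := by ring
      _ ≤ 2 ^ k * 4⁻¹ ^ k := by gcongr; exact hsmall k
      _ = 2⁻¹ ^ k := by rw [← mul_pow]; norm_num
  refine squeeze_zero (fun k => ?_) hbound
    (tendsto_pow_atTop_nhds_zero_of_lt_one (by norm_num) (by norm_num))
  exact mul_nonneg (one_div_pos.2 (pos_of_two_mul_lt h0 h2 k)).le <|
    setIntegral_nonneg measurableSet_Ioc fun s hs => mul_nonneg (by positivity) (hg0 s hs.1)

/-- boosting the weight for the kinetic energy average (global case). -/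
theorem stmt3 (g : ℝ → ℝ) (hgm : Measurable g)
    (hgb : ∃ B, ∀ t > (0:ℝ), |g t| ≤ B)
    (hg0 : ∀ t > (0:ℝ), 0 ≤ g t)
    (hnz : ∀ T > (0:ℝ), ∃ s > T, g s ≠ 0)
    (havg : Tendsto (fun t => (1 / t) * ∫ s in Set.Ioc (0:ℝ) t, g s) atTop (nhds 0)) :
    ∃ lam : ℝ → ℝ, (∀ t > (0:ℝ), 0 < lam t) ∧
      MonotoneOn lam (Set.Ioi (0:ℝ)) ∧
      Tendsto lam atTop atTop ∧
      ∃ tk : ℕ → ℝ, (∀ k, 0 < tk k) ∧ (∀ k, 2 * tk k < tk (k + 1)) ∧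
        Tendsto tk atTop atTop ∧
        Tendsto (fun k => (1 / tk k) * ∫ s in Set.Ioc (0:ℝ) (tk k), lam s * g s)
          atTop (nhds 0) :=
  stmt3_general g hgm hgb hg0 havg
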